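/- arXiv:2501.04417 — 5 statements merged into one kernel-verified Lean document; each statement's English description precedes it below -/
import Mathlib

section
/- For every integer n ≥ 3, the map Φ_n : A_n → N_n defined by Φ_n(S) = (S \ {n}) ∪ (n, ∞) is injective but not surjective; in particular the ordinary semigroup O_{n+1} = {0} ∪ [n+1, ∞) lies in N_n but not in the image of Φ_n. -/
/-- A numerical semigroup: a cofinite additive submonoid of ℕ containing 0. -/
structure NumericalSemigroup where
  carrier : Set ℕ
  zero_mem : 0 ∈ carrier
  add_mem : ∀ ⦃a b : ℕ⦄, a ∈ carrier → b ∈ carrier → a + b ∈ carrier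
  cofinite : (carrierᶜ : Set ℕ).Finite

namespace NumericalSemigroup

/-- The primitives (minimal generators): nonzero elements not expressible as a sum
of two nonzero elements. -/
def primitives (S : NumericalSemigroup) : Set ℕ :=
  {x | x ∈ S.carrier ∧ x ≠ 0 ∧
    ¬ ∃ a b : ℕ, a ∈ S.carrier ∧ b ∈ S.carrier ∧ a ≠ 0 ∧ b ≠ 0 ∧ x = a + b}

/-- The maximum primitive. -/
noncomputable def maxPrim (S : NumericalSemigroup) : ℕ := sSup (primitives S)

/-- The multiplicity: the least primitive (= least nonzero element). -/
noncomputable def multiplicity (S : NumericalSemigroup) : ℕ := sInf (primitives S)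

/-- The Frobenius number: the largest gap (0 for ℕ by convention here). -/
noncomputable def frob (S : NumericalSemigroup) : ℕ := sSup (S.carrierᶜ)

/-- The set of left elements. -/
noncomputable def lefts (S : NumericalSemigroup) : Set ℕ := S.carrier ∩ Set.Iio (frob S)

/-- The extended set of left elements. -/
noncomputable def extLefts (S : NumericalSemigroup) : Set ℕ := lefts S ∪ {frob S}

end NumericalSemigroup

open NumericalSemigroup

/-- The gcd of a set of naturals: the greatest common divisor of all its elements. -/
noncomputable def setGcd (A : Set ℕ) : ℕ := sSup {d | ∀ x ∈ A, d ∣ x}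

/-- The number of numerical semigroups with maximum primitive `n`. -/
noncomputable def countMaxPrim (n : ℕ) : ℕ :=
  {S : NumericalSemigroup | maxPrim S = n}.ncard

/-- The number of numerical semigroups with Frobenius number `n`. -/
noncomputable def countFrob (n : ℕ) : ℕ :=
  {S : NumericalSemigroup | frob S = n}.ncard

/-- The ordinary semigroup `O_n = {0} ∪ [n, ∞)`. -/
def ordinary (n : ℕ) : NumericalSemigroup where
  carrier := {x : ℕ | x = 0 ∨ n ≤ x}
  zero_mem := Or.inl rfl
  add_mem := by rintro a b (ha | ha) (hb | hb) <;> simp only [Set.mem_setOf_eq] <;> omega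
  cofinite := Set.Finite.subset (Set.finite_Iio n) (by
    intro x hx
    simp only [Set.mem_compl_iff, Set.mem_setOf_eq, not_or, not_le] at hx
    exact hx.2)

/-!
A numerical semigroup is generated by its elements up to its maximum primitive `n`, since every
larger element splits as a sum of two smaller nonzero ones. `Φ_n(S)` keeps the elements of `S`
below `n`, and `n ∈ S`, so `Φ_n(S)` determines `S`. If `Φ_n(S) = O_{n+1}`, then `S` has no nonzero
element below `n`, so `n` is its only primitive and `S ⊆ nℕ`, which is not cofinite for `n ≥ 2`.
-/

namespace NumericalSemigroup

theorem carrier_injective : Function.Injective carrier := by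
  rintro ⟨_, _, _, _⟩ ⟨_, _, _, _⟩ rfl
  rfl

theorem exists_forall_ge_mem (S : NumericalSemigroup) : ∃ N, ∀ x, N ≤ x → x ∈ S.carrier := by
  obtain ⟨K, hK⟩ := S.cofinite.bddAbove
  exact ⟨K + 1, fun x hx => by_contra fun hxS => by have := hK hxS; omega⟩

theorem bddAbove_primitives (S : NumericalSemigroup) : BddAbove S.primitives := by
  obtain ⟨N, hN⟩ := S.exists_forall_ge_mem
  refine ⟨2 * (N + 1), fun p hp => ?_⟩
  by_contra! hlt
  exact hp.2.2 ⟨N + 1, p - (N + 1), hN _ (by omega), hN _ (by omega), by omega, by omega, by omega⟩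

theorem le_maxPrim {S : NumericalSemigroup} {p : ℕ} (hp : p ∈ S.primitives) : p ≤ S.maxPrim :=
  le_csSup S.bddAbove_primitives hp

theorem maxPrim_mem_primitives {S : NumericalSemigroup} (h : S.maxPrim ≠ 0) :
    S.maxPrim ∈ S.primitives := by
  refine Nat.sSup_mem (Set.nonempty_iff_ne_empty.2 fun he => h ?_) S.bddAbove_primitives
  rw [maxPrim, he, csSup_empty]
  rfl

theorem exists_add_of_notMem_primitives {S : NumericalSemigroup} {x : ℕ} (hx : x ∈ S.carrier)
    (hx0 : x ≠ 0) (hxp : x ∉ S.primitives) :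
    ∃ a b, a ∈ S.carrier ∧ b ∈ S.carrier ∧ a ≠ 0 ∧ b ≠ 0 ∧ x = a + b := by
  by_contra h
  exact hxp ⟨hx, hx0, h⟩

theorem carrier_subset_of_forall_le_maxPrim {S T : NumericalSemigroup}
    (h : ∀ x ≤ S.maxPrim, x ∈ S.carrier → x ∈ T.carrier) : S.carrier ⊆ T.carrier := by
  intro x
  induction x using Nat.strong_induction_on with
  | _ x ih =>
    intro hx
    by_cases hle : x ≤ S.maxPrim
    · exact h x hle hx
    have hxp : x ∉ S.primitives := fun hxp => hle (le_maxPrim hxp)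
    obtain ⟨a, b, ha, hb, ha0, hb0, rfl⟩ := exists_add_of_notMem_primitives hx (by omega) hxp
    exact T.add_mem (ih a (by omega) ha) (ih b (by omega) hb)

theorem dvd_of_forall_primitives_dvd {S : NumericalSemigroup} {d : ℕ}
    (h : ∀ p ∈ S.primitives, d ∣ p) {x : ℕ} (hx : x ∈ S.carrier) : d ∣ x := by
  induction x using Nat.strong_induction_on with
  | _ x ih =>
    rcases eq_or_ne x 0 with rfl | hx0
    · exact dvd_zero d
    by_cases hxp : x ∈ S.primitives
    · exact h x hxp
    obtain ⟨a, b, ha, hb, ha0, hb0, rfl⟩ := exists_add_of_notMem_primitives hx hx0 hxp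
    exact dvd_add (ih a (by omega) ha) (ih b (by omega) hb)

/-- A common divisor of the primitives divides two consecutive elements, as `S` is cofinite. -/
theorem eq_one_of_forall_primitives_dvd {S : NumericalSemigroup} {d : ℕ}
    (h : ∀ p ∈ S.primitives, d ∣ p) : d = 1 := by
  obtain ⟨N, hN⟩ := S.exists_forall_ge_mem
  have hN₀ := dvd_of_forall_primitives_dvd h (hN N le_rfl)
  have hN₁ := dvd_of_forall_primitives_dvd h (hN (N + 1) (by omega))
  exact Nat.dvd_one.1 ((Nat.dvd_add_right hN₀).1 hN₁)

/-- The paper's map `Φ_n`, on carriers. -/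
def phi (n : ℕ) (S : NumericalSemigroup) : Set ℕ := (S.carrier \ {n}) ∪ Set.Ioi n

theorem carrier_subset_of_phi_subset {S T : NumericalSemigroup} {n : ℕ} (hn : n ≠ 0)
    (hS : maxPrim S = n) (hT : maxPrim T = n) (h : phi n S ⊆ phi n T) : S.carrier ⊆ T.carrier := by
  refine carrier_subset_of_forall_le_maxPrim fun x hx hxS => ?_
  rcases (hS ▸ hx).lt_or_eq with hlt | rfl
  · rcases h (Or.inl ⟨hxS, hlt.ne⟩) with hxT | hgt
    · exact hxT.1
    · exact (lt_asymm hlt hgt).elim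
  · exact hT ▸ (maxPrim_mem_primitives (hT ▸ hn)).1

theorem ordinary_succ_ne_phi {S : NumericalSemigroup} {n : ℕ} (hn : 2 ≤ n)
    (hS : maxPrim S = n) : (ordinary (n + 1)).carrier ≠ phi n S := by
  intro heq
  have hgap : ∀ x ∈ S.carrier, x < n → x = 0 := fun x hxS hxn => by
    have : x ∈ (ordinary (n + 1)).carrier := heq ▸ Or.inl ⟨hxS, hxn.ne⟩
    simp only [ordinary, Set.mem_ofPred_eq] at this
    omega
  have hprim : ∀ p ∈ S.primitives, n ∣ p := fun p hp => by
    rcases (hS ▸ le_maxPrim hp).lt_or_eq with hlt | rfl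
    · exact absurd (hgap p hp.1 hlt) hp.2.1
    · exact dvd_rfl
  have := eq_one_of_forall_primitives_dvd hprim
  omega

end NumericalSemigroup

open NumericalSemigroup

theorem frob_ordinary_succ (n : ℕ) : frob (ordinary (n + 1)) = n := by
  have hcompl : (ordinary (n + 1)).carrierᶜ = Set.Icc 1 n := by
    ext x
    simp only [ordinary, Set.mem_compl_iff, Set.mem_ofPred_eq, not_or, not_le, Set.mem_Icc]
    omega
  rw [frob, hcompl]
  refine le_antisymm (csSup_le' fun x hx => hx.2) ?_
  rcases Nat.eq_zero_or_pos n with rfl | hn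
  · exact Nat.zero_le _
  · exact le_csSup bddAbove_Icc ⟨hn, le_rfl⟩

theorem Phi_injective_not_surjective (n : ℕ) (hn : 3 ≤ n) :
    (∀ S T : NumericalSemigroup, maxPrim S = n → maxPrim T = n →
        (S.carrier \ {n}) ∪ Set.Ioi n = (T.carrier \ {n}) ∪ Set.Ioi n → S = T) ∧
    frob (ordinary (n + 1)) = n ∧
    ¬ ∃ S : NumericalSemigroup, maxPrim S = n ∧
        (ordinary (n + 1)).carrier = (S.carrier \ {n}) ∪ Set.Ioi n := by
  refine ⟨fun S T hS hT h => ?_, frob_ordinary_succ n, fun ⟨S, hS, heq⟩ => ?_⟩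
  · exact carrier_injective <| subset_antisymm
      (carrier_subset_of_phi_subset (by omega) hS hT h.subset)
      (carrier_subset_of_phi_subset (by omega) hT hS h.symm.subset)
  · exact ordinary_succ_ne_phi (by omega) hS heq
end

section
/- Let S be a numerical semigroup and d a positive divisor of gcd(L'(S)), where L'(S) is the extended set of left elements. Then the quotient S/d = {x ∈ ℕ : dx ∈ S} equals (1/d)·L(S) ∪ (F(S)/d, ∞), where L(S) = S ∩ [0, F(S)). In particular S/d is a numerical semigroup with Frobenius number F(S)/d. -/
open NumericalSemigroup

/-!
Every element of `S` is either a left element, the Frobenius number `F`, or larger than `F`.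
When `d` divides all left elements and `F`, the elements `d * x` of `S` below `F` are exactly the
left elements, read as `d * (s / d)`, while `d * x > F` amounts to `x > F / d`.
-/

theorem setGcd_dvd {A : Set ℕ} {a : ℕ} (ha : a ∈ A) (ha₀ : a ≠ 0) {x : ℕ} (hx : x ∈ A) :
    setGcd A ∣ x :=
  Nat.sSup_mem (s := {e | ∀ y ∈ A, e ∣ y}) ⟨1, fun y _ => one_dvd y⟩
    ⟨a, fun _ he => Nat.le_of_dvd (Nat.pos_of_ne_zero ha₀) (he a ha)⟩ x hx

namespace NumericalSemigroup

variable (S : NumericalSemigroup)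

theorem mem_of_frob_lt {n : ℕ} (h : S.frob < n) : n ∈ S.carrier := by
  by_contra hn
  exact h.not_ge (le_csSup S.cofinite.bddAbove hn)

theorem frob_notMem (hS : S.carrier ≠ Set.univ) : S.frob ∉ S.carrier :=
  Nat.sSup_mem (Set.nonempty_compl.mpr hS) S.cofinite.bddAbove

theorem frob_pos (hS : S.carrier ≠ Set.univ) : 0 < S.frob :=
  Nat.pos_of_ne_zero fun h => S.frob_notMem hS (h ▸ S.zero_mem)

theorem frob_eq_of_notMem {n : ℕ} (hn : n ∉ S.carrier) (h : ∀ m, n < m → m ∈ S.carrier) :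
    S.frob = n :=
  le_antisymm (csSup_le ⟨n, hn⟩ fun m hm => not_lt.mp fun hlt => hm (h m hlt))
    (le_csSup S.cofinite.bddAbove hn)

def quotient (d : ℕ) (hd : 0 < d) : NumericalSemigroup where
  carrier := {x | d * x ∈ S.carrier}
  zero_mem := by simpa using S.zero_mem
  add_mem a b ha hb := by simpa [Nat.mul_add] using S.add_mem ha hb
  cofinite := (Set.finite_Iic S.frob).subset fun x hx =>
    not_lt.mp fun h => hx (S.mem_of_frob_lt (h.trans_le (Nat.le_mul_of_pos_left x hd)))

variable {S}

theorem quotient_carrier_eq (hS : S.carrier ≠ Set.univ) {d : ℕ} (hd : 0 < d)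
    (hdvd : ∀ x ∈ S.extLefts, d ∣ x) :
    (S.quotient d hd).carrier = (fun s => s / d) '' S.lefts ∪ Set.Ioi (S.frob / d) := by
  ext x
  simp only [quotient, Set.mem_ofPred_eq, Set.mem_union, Set.mem_Ioi, Nat.div_lt_iff_lt_mul hd,
    mul_comm x d]
  constructor
  · intro hx
    rcases lt_or_gt_of_ne (ne_of_mem_of_not_mem hx (S.frob_notMem hS)) with hlt | hgt
    · exact Or.inl ⟨d * x, ⟨hx, hlt⟩, Nat.mul_div_cancel_left x hd⟩
    · exact Or.inr hgt
  · rintro (⟨s, hs, rfl⟩ | hgt)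
    · rw [Nat.mul_div_cancel' (hdvd s (Or.inl hs))]
      exact hs.1
    · exact S.mem_of_frob_lt hgt

theorem frob_quotient (hS : S.carrier ≠ Set.univ) {d : ℕ} (hd : 0 < d) (hdF : d ∣ S.frob) :
    (S.quotient d hd).frob = S.frob / d := by
  refine frob_eq_of_notMem _ ?_ fun m hm => ?_
  · change d * (S.frob / d) ∉ S.carrier
    rw [Nat.mul_div_cancel' hdF]
    exact S.frob_notMem hS
  · rw [Nat.div_lt_iff_lt_mul hd, mul_comm] at hm
    exact S.mem_of_frob_lt hm

end NumericalSemigroup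

theorem quotient_by_ext_left_divisor_general (S : NumericalSemigroup)
    (hS : S.carrier ≠ Set.univ) (d : ℕ)
    (hdvd : d ∣ setGcd (extLefts S)) :
    {x : ℕ | d * x ∈ S.carrier}
        = (fun s => s / d) '' lefts S ∪ Set.Ioi (frob S / d) ∧
    ∃ T : NumericalSemigroup, T.carrier = {x : ℕ | d * x ∈ S.carrier} ∧
        frob T = frob S / d := by
  have hdvd_ext : ∀ x ∈ S.extLefts, d ∣ x := fun _ hx =>
    hdvd.trans (setGcd_dvd (Or.inr rfl) (S.frob_pos hS).ne' hx)
  have hdF : d ∣ S.frob := hdvd_ext _ (Or.inr rfl)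
  have hd : 0 < d := Nat.pos_of_dvd_of_pos hdF (S.frob_pos hS)
  exact ⟨quotient_carrier_eq hS hd hdvd_ext, S.quotient d hd, rfl, frob_quotient hS hd hdF⟩

theorem quotient_by_ext_left_divisor (S : NumericalSemigroup)
    (hS : S.carrier ≠ Set.univ) (d : ℕ) (hd : 0 < d)
    (hdvd : d ∣ setGcd (extLefts S)) :
    {x : ℕ | d * x ∈ S.carrier}
        = (fun s => s / d) '' lefts S ∪ Set.Ioi (frob S / d) ∧
    ∃ T : NumericalSemigroup, T.carrier = {x : ℕ | d * x ∈ S.carrier} ∧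
        frob T = frob S / d :=
  quotient_by_ext_left_divisor_general S hS d hdvd
end

section
/- Let f be a positive integer and d a positive divisor of f. The map δ_d sending S to {x/d : x ∈ L(S)} ∪ (f/d, ∞) is a bijection from N_f(d) (numerical semigroups with Frobenius number f and gcd of extended left elements equal to d) to N_{f/d}(1) (numerical semigroups with Frobenius number f/d and gcd of extended left elements equal to 1). -/
open NumericalSemigroup

/-!
For `d > 0` put `S / d = {x | d x ∈ S}` and `d • S = d S ∪ (d F(S), ∞)`; both are numerical
semigroups and `(d • S) / d = S`. If `d` divides every element of `L'(S)`, then the elements of `S`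
below `F(S)` are multiples of `d`, hence `d • (S / d) = S`, `F(S / d) = F(S) / d` and
`δ_d(S) = S / d`. Finally `L'(d • R) = d L'(R)`, so scaling multiplies the gcd of `L'` by `d`;
thus `S ↦ S / d` and `R ↦ d • R` are mutually inverse between `N_f(d)` and `N_{f/d}(1)`.
-/

theorem dvd_setGcd_iff {A : Set ℕ} {a : ℕ} (ha : a ∈ A) (ha0 : a ≠ 0) {e : ℕ} :
    e ∣ setGcd A ↔ ∀ x ∈ A, e ∣ x := by
  have hbdd : BddAbove {d | ∀ x ∈ A, d ∣ x} :=
    ⟨a, fun d hd => Nat.le_of_dvd (Nat.pos_of_ne_zero ha0) (hd a ha)⟩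
  have hgcd : ∀ x ∈ A, setGcd A ∣ x :=
    Nat.sSup_mem (s := {d | ∀ x ∈ A, d ∣ x}) ⟨1, fun x _ => one_dvd x⟩ hbdd
  refine ⟨fun he x hx => he.trans (hgcd x hx), fun he => ?_⟩
  -- `lcm e (setGcd A)` is again a common divisor, so it cannot exceed `setGcd A`.
  have hlcm_le : Nat.lcm e (setGcd A) ≤ setGcd A :=
    le_csSup hbdd fun x hx => Nat.lcm_dvd (he x hx) (hgcd x hx)
  have hlcm_ne : Nat.lcm e (setGcd A) ≠ 0 :=
    Nat.lcm_ne_zero (ne_zero_of_dvd_ne_zero ha0 (he a ha))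
      (ne_zero_of_dvd_ne_zero ha0 (hgcd a ha))
  have hlcm : Nat.lcm e (setGcd A) = setGcd A :=
    le_antisymm hlcm_le (Nat.le_of_dvd (Nat.pos_of_ne_zero hlcm_ne) (Nat.dvd_lcm_right _ _))
  exact hlcm ▸ Nat.dvd_lcm_left e (setGcd A)

theorem setGcd_image_mul {A : Set ℕ} {a d : ℕ} (ha : a ∈ A) (ha0 : a ≠ 0) (hd : 0 < d) :
    setGcd ((d * ·) '' A) = d * setGcd A := by
  have hda : d * a ∈ (d * ·) '' A := ⟨a, ha, rfl⟩
  have hda0 : d * a ≠ 0 := mul_ne_zero hd.ne' ha0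
  apply Nat.dvd_antisymm
  · obtain ⟨k, hk⟩ : d ∣ setGcd ((d * ·) '' A) :=
      (dvd_setGcd_iff hda hda0).2 (by rintro _ ⟨x, -, rfl⟩; exact dvd_mul_right d x)
    rw [hk]
    refine mul_dvd_mul_left d ((dvd_setGcd_iff ha ha0).2 fun x hx => ?_)
    have hdvd := (dvd_setGcd_iff hda hda0).1 dvd_rfl (d * x) ⟨x, hx, rfl⟩
    rw [hk] at hdvd
    exact Nat.dvd_of_mul_dvd_mul_left hd hdvd
  · rw [dvd_setGcd_iff hda hda0]
    rintro _ ⟨x, hx, rfl⟩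
    exact mul_dvd_mul_left d ((dvd_setGcd_iff ha ha0).1 dvd_rfl x hx)


namespace NumericalSemigroup

variable {S : NumericalSemigroup} {d x : ℕ}

@[ext]
theorem ext {T : NumericalSemigroup} (h : S.carrier = T.carrier) : S = T := by
  cases S; cases T; cases h; rfl

theorem le_frob_of_notMem (hx : x ∉ S.carrier) : x ≤ frob S :=
  le_csSup S.cofinite.bddAbove hx

theorem mem_of_frob_lt_s12 (hx : frob S < x) : x ∈ S.carrier :=
  by_contra fun h => (le_frob_of_notMem h).not_gt hx

theorem frob_notMem_s12 (hF : 0 < frob S) : frob S ∉ S.carrier :=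
  Nat.sSup_mem (Set.nonempty_iff_ne_empty.2 fun h => by simp [frob, h] at hF)
    S.cofinite.bddAbove

theorem frob_eq_of_forall {f : ℕ} (hf : f ∉ S.carrier) (h : ∀ x, f < x → x ∈ S.carrier) :
    frob S = f :=
  le_antisymm (csSup_le ⟨f, hf⟩ fun _ hx => not_lt.1 fun hlt => hx (h _ hlt))
    (le_frob_of_notMem hf)

theorem carrier_eq_lefts_union_Ioi (hF : 0 < frob S) :
    S.carrier = lefts S ∪ Set.Ioi (frob S) := by
  ext x
  refine ⟨fun hx => ?_, ?_⟩
  · rcases lt_trichotomy x (frob S) with h | rfl | h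
    · exact Or.inl ⟨hx, h⟩
    · exact absurd hx (frob_notMem_s12 hF)
    · exact Or.inr h
  · rintro (hx | hx)
    exacts [hx.1, mem_of_frob_lt_s12 hx]

theorem frob_mem_extLefts : frob S ∈ extLefts S := Or.inr rfl

def scale (S : NumericalSemigroup) (d : ℕ) : NumericalSemigroup where
  carrier := (d * ·) '' S.carrier ∪ Set.Ioi (d * frob S)
  zero_mem := Or.inl ⟨0, S.zero_mem, mul_zero d⟩
  add_mem := by
    rintro _ _ (⟨a, ha, rfl⟩ | ha) (⟨b, hb, rfl⟩ | hb)
    · exact Or.inl ⟨a + b, S.add_mem ha hb, mul_add d a b⟩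
    all_goals right; simp only [Set.mem_Ioi] at *; omega
  cofinite := (Set.finite_Iic (d * frob S)).subset fun _ hx =>
    Set.mem_Iic.2 (not_lt.1 fun h => hx (Or.inr h))

def quot (S : NumericalSemigroup) (d : ℕ) : NumericalSemigroup where
  carrier := {x | d * x ∈ S.carrier}
  zero_mem := by simpa using S.zero_mem
  add_mem a b ha hb := by
    simpa only [Set.mem_ofPred_eq, mul_add] using S.add_mem ha hb
  cofinite := (Set.finite_Iic (frob S)).subset fun x hx => by
    have hd : d ≠ 0 := by rintro rfl; exact hx (by simpa using S.zero_mem)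
    exact (Nat.le_mul_of_pos_left x (Nat.pos_of_ne_zero hd)).trans (le_frob_of_notMem hx)

theorem mem_scale : x ∈ (S.scale d).carrier ↔ x ∈ (d * ·) '' S.carrier ∨ d * frob S < x :=
  Iff.rfl

theorem mem_quot : x ∈ (S.quot d).carrier ↔ d * x ∈ S.carrier := Iff.rfl

theorem quot_scale (hd : 0 < d) : (S.scale d).quot d = S := by
  ext x
  rw [mem_quot, mem_scale]
  refine ⟨?_, fun hx => Or.inl ⟨x, hx, rfl⟩⟩
  rintro (⟨y, hy, hyx⟩ | hx)
  · rwa [← Nat.eq_of_mul_eq_mul_left hd hyx]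
  · exact mem_of_frob_lt_s12 (Nat.lt_of_mul_lt_mul_left hx)

theorem frob_scale (hd : 0 < d) (hF : 0 < frob S) : frob (S.scale d) = d * frob S := by
  refine frob_eq_of_forall ?_ fun _ hx => Or.inr hx
  rw [mem_scale]
  rintro (⟨y, hy, hyF⟩ | h)
  · exact frob_notMem_s12 hF (Nat.eq_of_mul_eq_mul_left hd hyF ▸ hy)
  · exact lt_irrefl _ h

theorem lefts_scale (hd : 0 < d) (hF : 0 < frob S) :
    lefts (S.scale d) = (d * ·) '' lefts S := by
  ext x
  simp only [lefts, frob_scale hd hF, Set.mem_inter_iff, Set.mem_Iio, mem_scale, Set.mem_image]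
  constructor
  · rintro ⟨⟨y, hy, rfl⟩ | h, hlt⟩
    · exact ⟨y, ⟨hy, Nat.lt_of_mul_lt_mul_left hlt⟩, rfl⟩
    · exact absurd h (not_lt.2 hlt.le)
  · rintro ⟨y, ⟨hy, hlt⟩, rfl⟩
    exact ⟨Or.inl ⟨y, hy, rfl⟩, Nat.mul_lt_mul_of_pos_left hlt hd⟩

theorem extLefts_scale (hd : 0 < d) (hF : 0 < frob S) :
    extLefts (S.scale d) = (d * ·) '' extLefts S := by
  rw [extLefts, extLefts, lefts_scale hd hF, frob_scale hd hF, Set.image_union,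
    Set.image_singleton]

theorem frob_quot (hd : 0 < d) (hF : 0 < frob S) (hdvd : d ∣ frob S) :
    frob (S.quot d) = frob S / d := by
  refine frob_eq_of_forall ?_ fun y hy => ?_
  · rw [mem_quot, Nat.mul_div_cancel' hdvd]
    exact frob_notMem_s12 hF
  · rw [Nat.div_lt_iff_lt_mul hd, mul_comm] at hy
    exact mem_quot.2 (mem_of_frob_lt_s12 hy)

section Divisible

variable (hd : 0 < d) (hF : 0 < frob S) (hdvd : ∀ x ∈ extLefts S, d ∣ x)
include hd hF hdvd

theorem scale_quot : (S.quot d).scale d = S := by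
  have hdF := hdvd _ frob_mem_extLefts
  ext x
  rw [mem_scale, frob_quot hd hF hdF, Nat.mul_div_cancel' hdF]
  refine ⟨?_, fun hx => ?_⟩
  · rintro (⟨y, hy, rfl⟩ | hx)
    exacts [hy, mem_of_frob_lt_s12 hx]
  rcases lt_or_gt_of_ne (ne_of_mem_of_not_mem hx (frob_notMem_s12 hF)) with hlt | hlt
  · obtain ⟨y, rfl⟩ := hdvd x (Or.inl ⟨hx, hlt⟩)
    exact Or.inl ⟨y, hx, rfl⟩
  · exact Or.inr hlt

theorem carrier_quot : (S.quot d).carrier = (· / d) '' lefts S ∪ Set.Ioi (frob S / d) := by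
  have hdF := hdvd _ frob_mem_extLefts
  have hF' : 0 < frob (S.quot d) := by
    rw [frob_quot hd hF hdF]
    exact Nat.div_pos (Nat.le_of_dvd hF hdF) hd
  have hlefts : lefts S = (d * ·) '' lefts (S.quot d) := by
    conv_lhs => rw [← scale_quot hd hF hdvd]
    rw [lefts_scale hd hF']
  rw [carrier_eq_lefts_union_Ioi hF', frob_quot hd hF hdF, hlefts, Set.image_image]
  simp only [Nat.mul_div_cancel_left _ hd, Set.image_id']

end Divisible

theorem dvd_of_mem_extLefts (hF : 0 < frob S) (hd : setGcd (extLefts S) = d) :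
    ∀ x ∈ extLefts S, d ∣ x :=
  hd ▸ (dvd_setGcd_iff frob_mem_extLefts hF.ne').1 dvd_rfl

theorem setGcd_extLefts_scale (hd : 0 < d) (hF : 0 < frob S) :
    setGcd (extLefts (S.scale d)) = d * setGcd (extLefts S) := by
  rw [extLefts_scale hd hF, setGcd_image_mul frob_mem_extLefts hF.ne' hd]

end NumericalSemigroup

theorem delta_bijective (f d : ℕ) (hf : 0 < f) (hd : 0 < d) (hdvd : d ∣ f) :
    ∃ e : {S : NumericalSemigroup // frob S = f ∧ setGcd (extLefts S) = d} ≃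
          {S : NumericalSemigroup // frob S = f / d ∧ setGcd (extLefts S) = 1},
      ∀ S, (e S).1.carrier
          = (fun s => s / d) '' lefts S.1 ∪ Set.Ioi (f / d) := by
  have hfd : 0 < f / d := Nat.div_pos (Nat.le_of_dvd hf hdvd) hd
  have hSf : ∀ S : {S : NumericalSemigroup // frob S = f ∧ setGcd (extLefts S) = d},
      0 < frob S.1 ∧ d ∣ frob S.1 := fun S => by rw [S.2.1]; exact ⟨hf, hdvd⟩
  have hSd : ∀ S : {S : NumericalSemigroup // frob S = f ∧ setGcd (extLefts S) = d},
      ∀ x ∈ extLefts S.1, d ∣ x := fun S => dvd_of_mem_extLefts (hSf S).1 S.2.2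
  have hRf : ∀ R : {R : NumericalSemigroup // frob R = f / d ∧ setGcd (extLefts R) = 1},
      0 < frob R.1 := fun R => by rw [R.2.1]; exact hfd
  refine ⟨{
    toFun := fun S => ⟨S.1.quot d, ?frob_quot, ?gcd_quot⟩
    invFun := fun R => ⟨R.1.scale d, ?frob_scale, ?gcd_scale⟩
    left_inv := fun S => Subtype.ext (scale_quot hd (hSf S).1 (hSd S))
    right_inv := fun R => Subtype.ext (quot_scale hd) }, fun S => ?carrier⟩
  case frob_quot => rw [frob_quot hd (hSf S).1 (hSf S).2, S.2.1]
  case gcd_quot =>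
    have hF : 0 < frob (S.1.quot d) := by rwa [frob_quot hd (hSf S).1 (hSf S).2, S.2.1]
    refine Nat.eq_of_mul_eq_mul_left hd ?_
    rw [mul_one, ← setGcd_extLefts_scale hd hF, scale_quot hd (hSf S).1 (hSd S), S.2.2]
  case frob_scale => rw [frob_scale hd (hRf R), R.2.1, Nat.mul_div_cancel' hdvd]
  case gcd_scale => rw [setGcd_extLefts_scale hd (hRf R), R.2.2, mul_one]
  case carrier =>
    show (S.1.quot d).carrier = _
    rw [carrier_quot hd (hSf S).1 (hSd S), S.2.1]
end

section
/- If q is a positive divisor of a positive integer f, then N_q ≤ N_f, where N_k denotes the number of numerical semigroups with Frobenius number k. -/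
open NumericalSemigroup

/-!
If `q ∣ f`, say `f = m * q`, then `S ↦ m • S ∪ (f, ∞)` sends numerical semigroups with
Frobenius number `q` to numerical semigroups with Frobenius number `f = m * q`, and it is
injective there: below `f` the image only sees `m • S`, and `S` is determined by its
elements up to `q`.
-/

namespace NumericalSemigroup

theorem mem_of_frob_lt_s15 {S : NumericalSemigroup} {n : ℕ} (hn : frob S < n) : n ∈ S.carrier := by
  by_contra h
  exact hn.not_ge (le_csSup S.cofinite.bddAbove h)

theorem frob_eq_iff {S : NumericalSemigroup} {k : ℕ} (hk : 0 < k) :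
    frob S = k ↔ k ∉ S.carrier ∧ ∀ n, k < n → n ∈ S.carrier := by
  constructor
  · rintro rfl
    refine ⟨fun hmem => ?_, fun n => mem_of_frob_lt_s15⟩
    have hne : (S.carrierᶜ).Nonempty := by
      by_contra hempty
      simp [frob, Set.not_nonempty_iff_eq_empty.mp hempty] at hk
    exact Nat.sSup_mem hne S.cofinite.bddAbove hmem
  · rintro ⟨hk_gap, habove⟩
    refine le_antisymm (csSup_le ⟨k, hk_gap⟩ fun n hn => ?_) (le_csSup S.cofinite.bddAbove hk_gap)
    by_contra hlt
    exact hn (habove n (not_le.mp hlt))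

theorem eq_of_inter_Iic_eq {S T : NumericalSemigroup} {k : ℕ} (hS : frob S ≤ k)
    (hT : frob T ≤ k) (h : S.carrier ∩ Set.Iic k = T.carrier ∩ Set.Iic k) : S = T := by
  refine carrier_injective (Set.ext fun n => ?_)
  rcases le_or_gt n k with hn | hn
  · simpa [hn] using Set.ext_iff.mp h n
  · exact iff_of_true (mem_of_frob_lt_s15 (hS.trans_lt hn)) (mem_of_frob_lt_s15 (hT.trans_lt hn))

theorem finite_setOf_frob_eq (k : ℕ) : {S : NumericalSemigroup | frob S = k}.Finite := by
  refine Set.Finite.of_finite_image (f := fun S => S.carrier ∩ Set.Iic k)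
    ((Set.finite_Iic k).finite_subsets.subset ?_) fun S hS T hT => ?_
  · rintro _ ⟨S, -, rfl⟩
    exact Set.inter_subset_right
  · exact eq_of_inter_Iic_eq (le_of_eq hS) (le_of_eq hT)

def scaleFill (m f : ℕ) (S : NumericalSemigroup) : NumericalSemigroup where
  carrier := {x | (∃ s ∈ S.carrier, x = m * s) ∨ f < x}
  zero_mem := Or.inl ⟨0, S.zero_mem, (mul_zero m).symm⟩
  add_mem := by
    rintro a b (⟨s, hs, rfl⟩ | ha) (⟨t, ht, rfl⟩ | hb)
    · exact Or.inl ⟨s + t, S.add_mem hs ht, (mul_add m s t).symm⟩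
    · exact Or.inr (hb.trans_le (Nat.le_add_left _ _))
    all_goals exact Or.inr (ha.trans_le (Nat.le_add_right _ _))
  cofinite := (Set.finite_Iic f).subset fun x hx => not_lt.mp fun hfx => hx (Or.inr hfx)

theorem mul_mem_scaleFill_iff {m f x : ℕ} (hm : 0 < m) (hx : m * x ≤ f)
    (S : NumericalSemigroup) : m * x ∈ (scaleFill m f S).carrier ↔ x ∈ S.carrier := by
  refine ⟨?_, fun hxS => Or.inl ⟨x, hxS, rfl⟩⟩
  rintro (⟨s, hs, hxs⟩ | hfx)
  · rwa [Nat.eq_of_mul_eq_mul_left hm hxs]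
  · exact absurd hx (not_le.mpr hfx)

theorem frob_scaleFill {m q : ℕ} (hm : 0 < m) (hq : 0 < q) {S : NumericalSemigroup}
    (hS : frob S = q) : frob (scaleFill m (m * q) S) = m * q := by
  rw [frob_eq_iff hq] at hS
  rw [frob_eq_iff (Nat.mul_pos hm hq), mul_mem_scaleFill_iff hm le_rfl]
  exact ⟨hS.1, fun n hn => Or.inr hn⟩

theorem scaleFill_injOn {m q : ℕ} (hm : 0 < m) :
    Set.InjOn (scaleFill m (m * q)) {S | frob S ≤ q} := by
  intro S hS T hT hST
  refine eq_of_inter_Iic_eq hS hT (Set.ext fun x => ?_)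
  simp only [Set.mem_inter_iff, Set.mem_Iic, and_congr_left_iff]
  intro hx
  rw [← mul_mem_scaleFill_iff hm (Nat.mul_le_mul_left m hx), hST, mul_mem_scaleFill_iff hm]
  exact Nat.mul_le_mul_left m hx

end NumericalSemigroup

theorem countFrob_divisor_le (f q : ℕ) (hf : 0 < f) (hq : 0 < q) (hdvd : q ∣ f) :
    countFrob q ≤ countFrob f := by
  obtain ⟨m, rfl⟩ := hdvd
  rw [mul_comm] at hf ⊢
  have hm : 0 < m := Nat.pos_of_mul_pos_right hf
  exact Set.ncard_le_ncard_of_injOn (scaleFill m (m * q)) (fun S hS => frob_scaleFill hm hq hS)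
    ((scaleFill_injOn hm).mono fun _ => le_of_eq) (finite_setOf_frob_eq (m * q))
end

section
/- For every integer n ≥ 3, the number A_n of numerical semigroups with maximum primitive n satisfies A_n ≥ 2^⌊(n−1)/2⌋ − F_{⌊(n−1)/2⌋+1}, where F_k is the k-th Fibonacci number. -/
open NumericalSemigroup

open AddSubmonoid

/-- Any element of the closure is 0, a generator, or a sum of two nonzero closure elements. -/
lemma closure_struct {s : Set ℕ} {x : ℕ} (hx : x ∈ AddSubmonoid.closure s) :
    x = 0 ∨ x ∈ s ∨ ∃ a b : ℕ, a ∈ AddSubmonoid.closure s ∧ b ∈ AddSubmonoid.closure s ∧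
      a ≠ 0 ∧ b ≠ 0 ∧ x = a + b := by
  induction hx using AddSubmonoid.closure_induction with
  | mem x h => exact Or.inr (Or.inl h)
  | zero => exact Or.inl rfl
  | add x y hx hy ihx ihy =>
    rcases eq_or_ne x 0 with rfl | hx0
    · simpa using ihy
    rcases eq_or_ne y 0 with rfl | hy0
    · simpa using ihx
    exact Or.inr (Or.inr ⟨x, y, hx, hy, hx0, hy0, rfl⟩)

lemma closure_pos_lb {c : ℕ} {s : Set ℕ} (hs : ∀ x ∈ s, c < x) {x : ℕ}
    (hx : x ∈ AddSubmonoid.closure s) : x = 0 ∨ c < x := by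
  induction hx using AddSubmonoid.closure_induction with
  | mem x h => exact Or.inr (hs x h)
  | zero => exact Or.inl rfl
  | add x y hx hy ihx ihy => omega

/-- A submonoid of ℕ containing two consecutive positive numbers is cofinite. -/
lemma cofinite_of_consec (M : AddSubmonoid ℕ) (a : ℕ) (ha1 : 1 ≤ a) (ha : a ∈ M)
    (ha' : a + 1 ∈ M) : ((M : Set ℕ)ᶜ).Finite := by
  apply Set.Finite.subset (Set.finite_Iio (a * a))
  intro N hN
  simp only [Set.mem_compl_iff, SetLike.mem_coe] at hN
  simp only [Set.mem_Iio]
  by_contra hge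
  push_neg at hge
  apply hN
  set q := N / a with hq
  set r := N % a with hr
  have hNe : N = a * q + r := (Nat.div_add_mod N a).symm
  have hra : r < a := Nat.mod_lt _ ha1
  have hqa : a ≤ q := Nat.le_div_iff_mul_le (by omega) |>.2 (by nlinarith)
  obtain ⟨t, ht⟩ : ∃ t, q = r + t := ⟨q - r, by omega⟩
  have hNd : N = r * (a + 1) + t * a := by rw [hNe, ht]; ring
  rw [hNd]
  have h1 : r * (a + 1) ∈ M := by simpa using M.nsmul_mem ha' r
  have h2 : t * a ∈ M := by simpa using M.nsmul_mem ha t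
  exact M.add_mem h1 h2

/-- A finset `X` is `n`-good if it sits in `(n/2, n)` and `X ∪ {n}` contains a
pair of consecutive integers. -/
def IsGood (n : ℕ) (X : Finset ℕ) : Prop :=
  X ⊆ Finset.Ioo (n / 2) n ∧ ∃ a ∈ X, a + 1 ∈ X ∨ a + 1 = n

open scoped Classical in
/-- The numerical semigroup generated by `X ∪ {n}` (junk value if not cofinite). -/
noncomputable def mkNS (n : ℕ) (X : Finset ℕ) : NumericalSemigroup :=
  if h : (((AddSubmonoid.closure (insert n ↑X : Set ℕ)) : Set ℕ)ᶜ).Finite then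
    ⟨_, AddSubmonoid.zero_mem _, fun _ _ ha hb => AddSubmonoid.add_mem _ ha hb, h⟩
  else ⟨Set.univ, trivial, fun _ _ _ _ => trivial, by simp⟩

lemma IsGood.bounds {n : ℕ} {X : Finset ℕ} (hn : 3 ≤ n) (hX : X ⊆ Finset.Ioo (n / 2) n) :
    ∀ x ∈ (insert n ↑X : Set ℕ), n / 2 < x ∧ x ≤ n := by
  intro x hx
  rcases hx with rfl | hx
  · exact ⟨Nat.div_lt_self (by omega) one_lt_two, le_rfl⟩
  · have := Finset.mem_Ioo.1 (hX hx); omega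

lemma mkNS_carrier {n : ℕ} {X : Finset ℕ} (hn : 3 ≤ n) (h : IsGood n X) :
    (mkNS n X).carrier = ((AddSubmonoid.closure (insert n ↑X : Set ℕ)) : Set ℕ) := by
  obtain ⟨hX, a, haX, hcons⟩ := h
  have ha' := Finset.mem_Ioo.1 (hX haX)
  have hfin : (((AddSubmonoid.closure (insert n ↑X : Set ℕ)) : Set ℕ)ᶜ).Finite := by
    apply cofinite_of_consec _ a (by omega)
    · exact subset_closure (Set.mem_insert_iff.2 (Or.inr haX))
    · rcases hcons with h1 | h1
      · exact subset_closure (Set.mem_insert_iff.2 (Or.inr h1))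
      · exact subset_closure (h1 ▸ Set.mem_insert _ _)
  rw [mkNS, dif_pos hfin]

lemma mkNS_mem_of_le {n : ℕ} {X : Finset ℕ} (hn : 3 ≤ n) (h : IsGood n X) {x : ℕ}
    (hx : x ∈ (mkNS n X).carrier) (hx0 : x ≠ 0) (hxn : x ≤ n) : x ∈ (insert n ↑X : Set ℕ) := by
  rw [mkNS_carrier hn h] at hx
  have hb := IsGood.bounds hn h.1
  rcases closure_struct hx with rfl | hmem | ⟨a, b, ha, hb', ha0, hb0, rfl⟩
  · exact absurd rfl hx0
  · exact hmem
  · exfalso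
    have h1 := closure_pos_lb (fun x hx => (hb x hx).1) ha
    have h2 := closure_pos_lb (fun x hx => (hb x hx).1) hb'
    omega

lemma mkNS_maxPrim {n : ℕ} {X : Finset ℕ} (hn : 3 ≤ n) (h : IsGood n X) :
    maxPrim (mkNS n X) = n := by
  have hb := IsGood.bounds hn h.1
  have hcar := mkNS_carrier hn h
  have hnosum : ∀ x : ℕ, x ≤ n → ¬ ∃ a b : ℕ, a ∈ (mkNS n X).carrier ∧ b ∈ (mkNS n X).carrier
      ∧ a ≠ 0 ∧ b ≠ 0 ∧ x = a + b := by
    rintro x hxn ⟨a, b, ha, hb', ha0, hb0, rfl⟩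
    rw [hcar] at ha hb'
    have h1 := closure_pos_lb (fun x hx => (hb x hx).1) ha
    have h2 := closure_pos_lb (fun x hx => (hb x hx).1) hb'
    omega
  have hnprim : n ∈ primitives (mkNS n X) := by
    refine ⟨?_, by omega, hnosum n le_rfl⟩
    rw [hcar]; exact subset_closure (Set.mem_insert _ _)
  have hub : ∀ p ∈ primitives (mkNS n X), p ≤ n := by
    rintro p ⟨hp, hp0, hpns⟩
    by_contra hgt
    push_neg at hgt
    rw [hcar] at hp
    rcases closure_struct hp with rfl | hmem | ⟨a, b, ha, hb', ha0, hb0, rfl⟩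
    · omega
    · exact absurd (hb p hmem).2 (by omega)
    · exact hpns ⟨a, b, by rwa [hcar], by rwa [hcar], ha0, hb0, rfl⟩
  exact le_antisymm (csSup_le ⟨n, hnprim⟩ hub) (le_csSup ⟨n, hub⟩ hnprim)

lemma mkNS_injOn {n : ℕ} (hn : 3 ≤ n) {X Y : Finset ℕ} (hX : IsGood n X) (hY : IsGood n Y)
    (hEq : mkNS n X = mkNS n Y) : X = Y := by
  have key : ∀ (Z W : Finset ℕ), IsGood n Z → IsGood n W → mkNS n Z = mkNS n W →
      Z ⊆ W := by
    intro Z W hZ hW hZW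
    intro x hxZ
    have hxIoo := Finset.mem_Ioo.1 (hZ.1 hxZ)
    have hxc : x ∈ (mkNS n W).carrier := by
      rw [← hZW, mkNS_carrier hn hZ]
      exact subset_closure (Set.mem_insert_iff.2 (Or.inr hxZ))
    have := mkNS_mem_of_le hn hW hxc (by omega) (by omega)
    rcases this with rfl | hx
    · omega
    · exact hx
  exact Finset.Subset.antisymm (key X Y hX hY hEq) (key Y X hY hX hEq.symm)

lemma NumericalSemigroup.ext' {S T : NumericalSemigroup} (h : S.carrier = T.carrier) :
    S = T := by
  cases S; cases T; simpa using h

lemma exists_conductor (S : NumericalSemigroup) :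
    ∃ c : ℕ, 1 ≤ c ∧ ∀ x, c ≤ x → x ∈ S.carrier := by
  obtain ⟨c, hc⟩ := S.cofinite.bddAbove
  refine ⟨c + 1, by omega, fun x hx => ?_⟩
  by_contra hxc
  exact absurd (hc hxc) (by omega)

lemma primitives_bddAbove (S : NumericalSemigroup) : BddAbove (primitives S) := by
  obtain ⟨c, hc1, hc⟩ := exists_conductor S
  refine ⟨2 * c, fun p hp => ?_⟩
  by_contra hlt
  push_neg at hlt
  exact hp.2.2 ⟨c, p - c, hc c le_rfl, hc (p - c) (by omega), by omega, by omega, by omega⟩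

lemma carrier_eq_closure_primitives (S : NumericalSemigroup) :
    S.carrier = ((AddSubmonoid.closure (primitives S)) : Set ℕ) := by
  ext x
  constructor
  · intro hx
    induction x using Nat.strong_induction_on with
    | _ x ih =>
      rcases eq_or_ne x 0 with rfl | hx0
      · exact AddSubmonoid.zero_mem _
      by_cases hp : x ∈ primitives S
      · exact subset_closure hp
      · have : ∃ a b : ℕ, a ∈ S.carrier ∧ b ∈ S.carrier ∧ a ≠ 0 ∧ b ≠ 0 ∧ x = a + b := by
          by_contra hcon
          exact hp ⟨hx, hx0, hcon⟩
        obtain ⟨a, b, ha, hb, ha0, hb0, rfl⟩ := this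
        exact AddSubmonoid.add_mem _ (ih a (by omega) ha) (ih b (by omega) hb)
  · intro hx
    let M : AddSubmonoid ℕ :=
      ⟨⟨S.carrier, fun {a b} ha hb => S.add_mem ha hb⟩, S.zero_mem⟩
    exact (AddSubmonoid.closure_le (S := M)).2 (fun p hp => hp.1) hx

lemma target_finite (n : ℕ) : {S : NumericalSemigroup | maxPrim S = n}.Finite := by
  apply Set.Finite.of_finite_image (f := primitives)
  · apply Set.Finite.subset ((Set.finite_Iic n).finite_subsets)
    rintro A ⟨S, hS, rfl⟩
    intro p hp
    simp only [Set.mem_Iic]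
    calc p ≤ sSup (primitives S) := le_csSup (primitives_bddAbove S) hp
    _ = n := hS
  · intro S _ T _ hST
    apply NumericalSemigroup.ext'
    rw [carrier_eq_closure_primitives S, carrier_eq_closure_primitives T, hST]

/-- Subsets of `range m` with no two consecutive elements. -/
def NC (m : ℕ) : Finset (Finset ℕ) :=
  (Finset.range m).powerset.filter (fun X => ∀ a ∈ X, a + 1 ∉ X)

lemma NC_succ_succ (m : ℕ) :
    NC (m + 2) = NC (m + 1) ∪ (NC m).image (insert (m + 1)) := by
  ext X
  simp only [NC, Finset.mem_union, Finset.mem_filter, Finset.mem_powerset, Finset.mem_image]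
  constructor
  · rintro ⟨hsub, hnc⟩
    by_cases hm : m + 1 ∈ X
    · right
      refine ⟨X.erase (m + 1), ⟨?_, ?_⟩, ?_⟩
      · intro x hx
        have hx' := Finset.mem_of_mem_erase hx
        have hne := Finset.ne_of_mem_erase hx
        have h1 := Finset.mem_range.1 (hsub hx')
        have h2 : x ≠ m := by
          rintro rfl
          exact hnc x hx' hm
        exact Finset.mem_range.2 (by omega)
      · intro a ha
        intro hcon
        exact hnc a (Finset.mem_of_mem_erase ha) (Finset.mem_of_mem_erase hcon)
      · exact Finset.insert_erase hm
    · left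
      refine ⟨fun x hx => ?_, hnc⟩
      have h1 := Finset.mem_range.1 (hsub hx)
      have h2 : x ≠ m + 1 := fun h => hm (h ▸ hx)
      exact Finset.mem_range.2 (by omega)
  · rintro (⟨hsub, hnc⟩ | ⟨Y, ⟨hsub, hnc⟩, rfl⟩)
    · exact ⟨hsub.trans (Finset.range_subset_range.2 (by omega)), hnc⟩
    · constructor
      · intro x hx
        rcases Finset.mem_insert.1 hx with rfl | hx
        · exact Finset.mem_range.2 (by omega)
        · exact Finset.mem_range.2 (by have := Finset.mem_range.1 (hsub hx); omega)
      · intro a ha hcon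
        rcases Finset.mem_insert.1 ha with rfl | haY
        · rcases Finset.mem_insert.1 hcon with h | h
          · omega
          · have := Finset.mem_range.1 (hsub h); omega
        · have haR := Finset.mem_range.1 (hsub haY)
          rcases Finset.mem_insert.1 hcon with h | h
          · omega
          · exact hnc a haY h

lemma NC_card (m : ℕ) : (NC m).card = Nat.fib (m + 2) := by
  induction m using Nat.twoStepInduction with
  | zero => decide
  | one => decide
  | more m ih1 ih2 =>
    rw [NC_succ_succ]
    have hdisj : Disjoint (NC (m + 1)) ((NC m).image (insert (m + 1))) := by
      rw [Finset.disjoint_left]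
      rintro X hX hX'
      obtain ⟨Y, hY, rfl⟩ := Finset.mem_image.1 hX'
      have hsub := (Finset.mem_filter.1 hX).1
      have := Finset.mem_powerset.1 hsub (Finset.mem_insert_self (m + 1) Y)
      exact absurd (Finset.mem_range.1 this) (by omega)
    rw [Finset.card_union_of_disjoint hdisj, Finset.card_image_of_injOn, ih1, ih2]
    · have h := Nat.fib_add_two (n := m + 2)
      simp only [show m+2+2 = m+4 from rfl, show m+2+1 = m+3 from rfl,
        show m+1+2 = m+3 from rfl] at *
      omega
    · intro Y hY Z hZ hYZ
      have hmY : m + 1 ∉ Y := fun h =>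
        absurd (Finset.mem_range.1 (Finset.mem_powerset.1 (Finset.mem_filter.1 hY).1 h)) (by omega)
      have hmZ : m + 1 ∉ Z := fun h =>
        absurd (Finset.mem_range.1 (Finset.mem_powerset.1 (Finset.mem_filter.1 hZ).1 h)) (by omega)
      rw [← Finset.erase_insert hmY, ← Finset.erase_insert hmZ, hYZ]

theorem countMaxPrim_fibonacci_lower_bound (n : ℕ) (hn : 3 ≤ n) :
    2 ^ ((n - 1) / 2) - Nat.fib ((n - 1) / 2 + 1) ≤ countMaxPrim n := by
  classical
  set k := n / 2 with hk
  set m := n - k - 1 with hmdef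
  have hm : (n - 1) / 2 = m := by omega
  set Good : Finset (Finset ℕ) :=
    (Finset.Ioo k n).powerset.filter (fun X => ∃ a ∈ X, a + 1 ∈ X ∨ a + 1 = n) with hGood
  set Bad : Finset (Finset ℕ) :=
    (Finset.Ioo k n).powerset.filter (fun X => ¬ ∃ a ∈ X, a + 1 ∈ X ∨ a + 1 = n) with hBad
  -- Step 1 : Good + Bad = 2 ^ m
  have h1 : Good.card + Bad.card = 2 ^ m := by
    rw [hGood, hBad, Finset.card_filter_add_card_filter_not,
      Finset.card_powerset, Nat.card_Ioo]
  -- Step 2 : Bad ≤ fib (m + 1)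
  have h2 : Bad.card ≤ Nat.fib (m + 1) := by
    have hle : Bad.card ≤ (NC (m - 1)).card := by
      apply Finset.card_le_card_of_injOn (fun X => X.image (fun x => x - (k + 1)))
      · intro X hX
        rw [Finset.mem_coe, hBad, Finset.mem_filter, Finset.mem_powerset] at hX
        obtain ⟨hsub, hbad⟩ := hX
        push_neg at hbad
        rw [Finset.mem_coe, NC, Finset.mem_filter, Finset.mem_powerset]
        constructor
        · intro y hy
          obtain ⟨x, hx, rfl⟩ := Finset.mem_image.1 hy
          have h3 := Finset.mem_Ioo.1 (hsub hx)
          have h4 := (hbad x hx).2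
          exact Finset.mem_range.2 (by omega)
        · intro a ha hcon
          obtain ⟨x, hx, hxe⟩ := Finset.mem_image.1 ha
          obtain ⟨y, hy, hye⟩ := Finset.mem_image.1 hcon
          have h3 := Finset.mem_Ioo.1 (hsub hx)
          have h4 := Finset.mem_Ioo.1 (hsub hy)
          have : y = x + 1 := by omega
          exact (hbad x hx).1 (this ▸ hy)
      · intro X hX Y hY hXY
        rw [Finset.mem_coe, Finset.mem_filter, Finset.mem_powerset] at hX hY
        have key : ∀ Z W : Finset ℕ, Z ⊆ Finset.Ioo k n → W ⊆ Finset.Ioo k n →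
            Z.image (fun x => x - (k + 1)) = W.image (fun x => x - (k + 1)) → Z ⊆ W := by
          intro Z W hZ hW hZW x hx
          have : x - (k + 1) ∈ W.image (fun x => x - (k + 1)) := by
            rw [← hZW]; exact Finset.mem_image_of_mem _ hx
          obtain ⟨y, hy, hye⟩ := Finset.mem_image.1 this
          have h3 := Finset.mem_Ioo.1 (hZ hx)
          have h4 := Finset.mem_Ioo.1 (hW hy)
          have : y = x := by omega
          exact this ▸ hy
        exact Finset.Subset.antisymm (key X Y hX.1 hY.1 hXY) (key Y X hY.1 hX.1 hXY.symm)
    rw [NC_card] at hle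
    have : m - 1 + 2 = m + 1 := by omega
    rwa [this] at hle
  -- Step 3 : Good ≤ countMaxPrim n
  have h3 : Good.card ≤ countMaxPrim n := by
    have hfin := target_finite n
    have : Good.card ≤ hfin.toFinset.card := by
      apply Finset.card_le_card_of_injOn (mkNS n)
      · intro X hX
        rw [Finset.mem_coe, hGood, Finset.mem_filter, Finset.mem_powerset] at hX
        rw [Finset.mem_coe, Set.Finite.mem_toFinset]
        exact mkNS_maxPrim hn ⟨hX.1, hX.2⟩
      · intro X hX Y hY hXY
        rw [Finset.mem_coe, Finset.mem_filter, Finset.mem_powerset] at hX hY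
        exact mkNS_injOn hn ⟨hX.1, hX.2⟩ ⟨hY.1, hY.2⟩ hXY
    rwa [countMaxPrim, Set.ncard_eq_toFinset_card _ hfin]
  rw [hm]
  generalize hP : (2 : ℕ) ^ m = P at *
  generalize hF : Nat.fib (m + 1) = F at *
  omega
end
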